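/- arXiv:1702.05079 — 2 statements merged into one kernel-verified Lean document; each statement's English description precedes it below -/
import Mathlib

section
/- Let (A, Con, ⊢, Δ) be an information system with witnesses and x ⊆ A. Then the conjunction of the two conditions '(∀ finite F ⊆ x)(∃ i ∈ x) F ∈ Con(i)' and '(∀ a ∈ x)(∃ i ∈ x)(∃ finite X ⊆ x) X ∈ Con(i) ∧ (i,X) ⊢ a' is equivalent to the single condition: (∀ finite F ⊆ x)(∃ i ∈ x)(∃ finite X ⊆ x) X ∈ Con(i) ∧ (i,X) ⊢ F. -/
/-- The way-below (approximation) relation in a preorder: `x` approximates `y` if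
for every directed set `S` whose least upper bound exists, `y ≤ sup S` implies
`x ≤ u` for some `u ∈ S`. -/
def wayBelow {α : Type*} [Preorder α] (x y : α) : Prop :=
  ∀ S : Set α, DirectedOn (· ≤ ·) S → S.Nonempty →
    ∀ l, IsLUB S l → y ≤ l → ∃ u ∈ S, x ≤ u

/-- Information system with witnesses (Definition 3.1). -/
structure IWS (A : Type*) where
  Δ : A
  Con : A → Finset A → Prop
  ent : A → Finset A → A → Prop
  entCon : ∀ i X a, ent i X a → Con i X
  ax1 : ∀ i, Con i {i}
  ax2 : ∀ i X Y, Y ⊆ X → Con i X → Con i Y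
  ax3 : ∀ i, ent i ∅ Δ
  ax4 : ∀ i X Y, Con i X → (∀ a ∈ Y, ent i X a) → Con i Y
  ax5 : ∀ i X Y a, Con i X → Con i Y → X ⊆ Y → ent i X a → ent i Y a
  ax6 : ∀ i X Y a, Con i X → (∀ b ∈ Y, ent i X b) → ent i Y a → ent i X a
  ax7 : ∀ i X a, ent i X a → ∃ Z, Con i Z ∧ (∀ z ∈ Z, ent i X z) ∧ ent i Z a
  ax8 : ∀ i X Y, Con i X → (∀ y ∈ Y, ent i X y) → ∃ e, ent i X e ∧ Con e Y
  ax9 : ∀ i j, Con j {i} → ∀ X, Con i X → Con j X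
  ax10 : ∀ i j X a, Con j {i} → Con i X → ent i X a → ent j X a
  ax11 : ∀ i j X a, Con j {i} → Con i X → ent j X a → ent i X a

namespace IWS

variable {A : Type*}

/-- A state of an information system with witnesses (Definition 3.5):
finitely consistent, entailment-closed and derivable. -/
def state (S : IWS A) (x : Set A) : Prop :=
  (∀ F : Finset A, ↑F ⊆ x → ∃ i ∈ x, S.Con i F) ∧
  (∀ i ∈ x, ∀ X : Finset A, ↑X ⊆ x → ∀ a, S.Con i X → S.ent i X a → a ∈ x) ∧
  (∀ a ∈ x, ∃ i ∈ x, ∃ X : Finset A, ↑X ⊆ x ∧ S.Con i X ∧ S.ent i X a)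

/-- X-equivalence of witnesses (Definition 5.1). -/
def weq (S : IWS A) (X : Finset A) (i j : A) : Prop :=
  ∃ (n : ℕ) (a k : ℕ → A), a 0 = i ∧ a n = j ∧
    ∀ ν, 1 ≤ ν → ν ≤ n →
      S.Con (a (ν - 1)) X ∧ S.Con (a ν) X ∧
      S.Con (k ν) {a (ν - 1)} ∧ S.Con (k ν) {a ν}

end IWS

/-- Approximable mappings between information systems with witnesses (Definition 4.1). -/
structure AppMap {A A' : Type*} (S : IWS A) (S' : IWS A') where
  rel : A → Finset A → A' → Prop
  relCon : ∀ i X b, rel i X b → S.Con i X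
  am1 : rel S.Δ ∅ S'.Δ
  am2 : ∀ i X X' b, S.Con i X → S.Con i X' → X ⊆ X' → rel i X b → rel i X' b
  am3 : ∀ i X X' b, S.Con i X → (∀ a ∈ X', S.ent i X a) → rel i X' b → rel i X b
  am4 : ∀ i X b, S.Con i X → rel i X b →
    ∃ U, S.Con i U ∧ (∀ u ∈ U, S.ent i X u) ∧ rel i U b
  am5 : ∀ i X k Y b, S.Con i X → S'.Con k Y → rel i X k → (∀ y ∈ Y, rel i X y) →
    S'.ent k Y b → rel i X b
  am6 : ∀ i X b, S.Con i X → rel i X b →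
    ∃ d V, S'.Con d V ∧ rel i X d ∧ (∀ v ∈ V, rel i X v) ∧ S'.ent d V b
  am7 : ∀ i X F, S.Con i X → (∀ c ∈ F, rel i X c) → ∃ e, rel i X e ∧ S'.Con e F
  am8 : ∀ i j X b, S.Con j {i} → S.Con i X → rel i X b → rel j X b
  am9 : ∀ i j X b, S.Con j {i} → S.Con i X → rel j X b → rel i X b


/-! Idea: derivability gives, for each `a ∈ F`, a witness `i_a ∈ x` and premises `X_a ⊆ x`
with `(i_a, X_a) ⊢ a`. Finite consistency of `x` yields one `j ∈ x` consistent with all the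
`i_a` and all the `X_a` at once; by the witness-change axioms `j` then entails every `a` from
`⋃ X_a`; the proof runs by induction on `F`, merging two witnesses at a time. -/

namespace IWS

variable {A : Type*} (S : IWS A)

theorem ent_of_con_singleton {i j : A} {X Y : Finset A} {a : A} (hji : S.Con j {i})
    (hY : S.Con j Y) (hXY : X ⊆ Y) (h : S.ent i X a) : S.ent j Y a :=
  have hX := S.entCon i X a h
  S.ax5 j X Y a (S.ax9 i j hji X hX) hY hXY (S.ax10 i j X a hji hX h)

def DerivableIn (x : Set A) (F : Finset A) : Prop :=
  ∃ i ∈ x, ∃ X : Finset A, ↑X ⊆ x ∧ S.Con i X ∧ ∀ a ∈ F, S.ent i X a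

variable {S} {x : Set A}

theorem DerivableIn.exists_con {F : Finset A} (h : S.DerivableIn x F) : ∃ i ∈ x, S.Con i F :=
  let ⟨i, hi, X, _, hX, hF⟩ := h
  ⟨i, hi, S.ax4 i X F hX hF⟩

theorem derivableIn_empty (hcon : ∀ F : Finset A, ↑F ⊆ x → ∃ i ∈ x, S.Con i F) :
    S.DerivableIn x ∅ :=
  let ⟨i, hi, hC⟩ := hcon ∅ (by simp)
  ⟨i, hi, ∅, by simp, hC, by simp⟩

theorem DerivableIn.union [DecidableEq A] (hcon : ∀ F : Finset A, ↑F ⊆ x → ∃ i ∈ x, S.Con i F)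
    {F G : Finset A} (hF : S.DerivableIn x F) (hG : S.DerivableIn x G) :
    S.DerivableIn x (F ∪ G) := by
  obtain ⟨i, hi, X, hXx, hX, hFi⟩ := hF
  obtain ⟨k, hk, Y, hYx, hY, hGk⟩ := hG
  obtain ⟨j, hj, hB⟩ := hcon (X ∪ Y ∪ {i, k}) (by
    simp only [Finset.coe_union, Finset.coe_insert, Finset.coe_singleton, Set.union_subset_iff,
      Set.insert_subset_iff, Set.singleton_subset_iff]
    exact ⟨⟨hXx, hYx⟩, hi, hk⟩)
  have hXY : S.Con j (X ∪ Y) := S.ax2 j _ _ Finset.subset_union_left hB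
  have hji : S.Con j {i} := S.ax2 j _ _ (by intro; simp +contextual) hB
  have hjk : S.Con j {k} := S.ax2 j _ _ (by intro; simp +contextual) hB
  refine ⟨j, hj, X ∪ Y, by simp [hXx, hYx], hXY, fun a ha => ?_⟩
  rcases Finset.mem_union.mp ha with ha | ha
  · exact S.ent_of_con_singleton hji hXY Finset.subset_union_left (hFi a ha)
  · exact S.ent_of_con_singleton hjk hXY Finset.subset_union_right (hGk a ha)

theorem derivableIn_of_forall_subset
    (hcon : ∀ F : Finset A, ↑F ⊆ x → ∃ i ∈ x, S.Con i F)
    (hder : ∀ a ∈ x, ∃ i ∈ x, ∃ X : Finset A, ↑X ⊆ x ∧ S.Con i X ∧ S.ent i X a)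
    (F : Finset A) (hF : ↑F ⊆ x) : S.DerivableIn x F := by
  classical
  induction F using Finset.induction_on with
  | empty => exact derivableIn_empty hcon
  | insert a F _ ih =>
    rw [Finset.coe_insert, Set.insert_subset_iff] at hF
    have ha : S.DerivableIn x {a} := by
      obtain ⟨i, hi, X, hXx, hX, hXa⟩ := hder a hF.1
      exact ⟨i, hi, X, hXx, hX, by simpa using hXa⟩
    simpa using ha.union hcon (ih hF.2)

end IWS

/-- Proposition 3.6: the two state conditions (finite consistency and derivability)
are together equivalent to the single condition (ST). -/
theorem state_single_cond {A : Type*} (S : IWS A) (x : Set A) :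
    ((∀ F : Finset A, ↑F ⊆ x → ∃ i ∈ x, S.Con i F) ∧
     (∀ a ∈ x, ∃ i ∈ x, ∃ X : Finset A, ↑X ⊆ x ∧ S.Con i X ∧ S.ent i X a)) ↔
    (∀ F : Finset A, ↑F ⊆ x →
      ∃ i ∈ x, ∃ X : Finset A, ↑X ⊆ x ∧ S.Con i X ∧ ∀ a ∈ F, S.ent i X a) := by
  refine ⟨fun ⟨hcon, hder⟩ => IWS.derivableIn_of_forall_subset hcon hder, fun h => ⟨?_, ?_⟩⟩
  · exact fun F hF => IWS.DerivableIn.exists_con (h F hF)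
  · intro a ha
    obtain ⟨i, hi, X, hXx, hX, hXa⟩ := h {a} (by simpa using ha)
    exact ⟨i, hi, X, hXx, hX, hXa a (Finset.mem_singleton_self a)⟩
end

section
/- Let (A, Con, ⊢, Δ) be an information system with witnesses. Then the poset of states (|A|, ⊆) with least element [∅]_Δ is an L-domain with basis { [X]_i : (i,X) ∈ Con }. -/
/-!
Directed suprema of states are unions, and every state is the union of the principal states
`[X]_i` with `i ∈ x`, `X ⊆ x`; such an `[X]_i` is compact since it is determined by finitely
many tokens. For states `x, y ⊆ z`, the join below `z` is the set of tokens entailed from a finite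
part of `x ∪ y` with a witness taken in `z`. It is the least state between `x ∪ y` and `z` because
any two witnesses lying in a common state are interchangeable.
-/

lemma isLUB_of_biUnion_eq {α : Type*} {p : Set α → Prop} {D : Set (Subtype p)}
    {x : Subtype p} (h : ⋃ u ∈ D, u.1 = x.1) : IsLUB D x :=
  ⟨fun _ hu => (Set.subset_biUnion_of_mem (u := Subtype.val) hu).trans h.subset,
    fun _ hl => h.symm.subset.trans (Set.iUnion₂_subset fun _ hu => hl hu)⟩

namespace IWS

variable {A : Type*}

/-- `[X]_i` -/
def principal (S : IWS A) (i : A) (X : Finset A) : Set A := {a | S.ent i X a}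

def span (S : IWS A) (z P : Set A) : Set A :=
  {a | ∃ i ∈ z, ∃ X : Finset A, ↑X ⊆ P ∧ S.Con i X ∧ S.ent i X a}

def approximants (S : IWS A) (x : Set A) : Set {x : Set A // S.state x} :=
  {u | ∃ i ∈ x, ∃ X : Finset A, ↑X ⊆ x ∧ S.Con i X ∧ u.1 = S.principal i X}

variable {S : IWS A} {i j k a : A} {X Y : Finset A}

lemma con_empty (i : A) : S.Con i ∅ :=
  S.ax2 i {i} ∅ (Finset.empty_subset _) (S.ax1 i)

lemma con_singleton_of_ent (h : S.Con i X) (ha : S.ent i X a) : S.Con i {a} :=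
  S.ax4 i X {a} h (by simpa using ha)

lemma ent_of_ent_of_subset_principal (h : S.Con i X) (hj : S.ent i X j)
    (hY : ↑Y ⊆ S.principal i X) (hjY : S.Con j Y) (ha : S.ent j Y a) : S.ent i X a :=
  S.ax6 i X Y a h (fun _ hb => hY hb) (S.ax10 j i Y a (con_singleton_of_ent h hj) hjY ha)

lemma exists_factor_of_ent (h : S.Con i X) (ha : S.ent i X a) :
    ∃ e Z, S.ent i X e ∧ ↑Z ⊆ S.principal i X ∧ S.Con e Z ∧ S.ent e Z a := by
  obtain ⟨Z, -, hZ, hZa⟩ := S.ax7 i X a ha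
  obtain ⟨e, he, heZ⟩ := S.ax8 i X Z h hZ
  exact ⟨e, Z, he, fun b hb => hZ b hb, heZ, S.ax11 e i Z a (con_singleton_of_ent h he) heZ hZa⟩

lemma principal_mono (hki : S.Con k {i}) (hiX : S.Con i X) (hkY : S.Con k Y) (hXY : X ⊆ Y) :
    S.principal i X ⊆ S.principal k Y := fun a ha =>
  S.ax5 k X Y a (S.ax9 i k hki X hiX) hkY hXY (S.ax10 i k X a hki hiX ha)

lemma state_principal (h : S.Con i X) : S.state (S.principal i X) :=
  ⟨fun F hF => S.ax8 i X F h fun _ hb => hF hb,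
    fun _ hj _ hY _ hjY ha => ent_of_ent_of_subset_principal h hj hY hjY ha,
    fun _ ha => by
      obtain ⟨e, Z, he, hZ, heZ, hea⟩ := exists_factor_of_ent h ha
      exact ⟨e, he, Z, hZ, heZ, hea⟩⟩

namespace state

variable {x z : Set A}

lemma exists_con (hx : S.state x) {F : Finset A} (hF : ↑F ⊆ x) : ∃ i ∈ x, S.Con i F :=
  hx.1 F hF

lemma ent_mem (hx : S.state x) (hi : i ∈ x) (hX : ↑X ⊆ x) (h : S.Con i X) (ha : S.ent i X a) :
    a ∈ x :=
  hx.2.1 i hi X hX a h ha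

lemma exists_ent (hx : S.state x) (ha : a ∈ x) :
    ∃ i ∈ x, ∃ X : Finset A, ↑X ⊆ x ∧ S.Con i X ∧ S.ent i X a :=
  hx.2.2 a ha

lemma principal_subset (hx : S.state x) (hi : i ∈ x) (hX : ↑X ⊆ x) (h : S.Con i X) :
    S.principal i X ⊆ x := fun _ => hx.ent_mem hi hX h

lemma delta_mem (hx : S.state x) : S.Δ ∈ x := by
  obtain ⟨i, hi, -⟩ := hx.exists_con (F := ∅) (by simp)
  exact hx.ent_mem hi (by simp) (con_empty i) (S.ax3 i)

lemma principal_delta_subset (hx : S.state x) : S.principal S.Δ ∅ ⊆ x :=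
  hx.principal_subset hx.delta_mem (by simp) (con_empty _)

lemma ent_of_ent (hz : S.state z) {m : A} (hi : i ∈ z) (hm : m ∈ z) (hiX : S.Con i X)
    (hmX : S.Con m X) (ha : S.ent i X a) : S.ent m X a := by
  classical
  obtain ⟨p, -, hp⟩ := hz.exists_con (F := {i, m}) (by simp [Set.insert_subset_iff, hi, hm])
  have hpi : S.Con p {i} := S.ax2 p _ _ (by simp) hp
  have hpm : S.Con p {m} := S.ax2 p _ _ (by simp) hp
  exact S.ax11 m p X a hpm hmX (S.ax10 i p X a hpi hiX ha)

lemma exists_principal_upper [DecidableEq A] (hz : S.state z) (hi : i ∈ z) (hk : k ∈ z)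
    (hX : ↑X ⊆ z) (hY : ↑Y ⊆ z) (hiX : S.Con i X) (hkY : S.Con k Y) :
    ∃ m ∈ z, S.Con m (X ∪ Y) ∧
      S.principal i X ⊆ S.principal m (X ∪ Y) ∧ S.principal k Y ⊆ S.principal m (X ∪ Y) := by
  obtain ⟨m, hm, hmH⟩ := hz.exists_con (F := insert i (insert k (X ∪ Y)))
    (by simp [Set.insert_subset_iff, hi, hk, hX, hY])
  have hmXY : S.Con m (X ∪ Y) := S.ax2 m _ _ (by grind) hmH
  have hmi : S.Con m {i} := S.ax2 m _ _ (by simp) hmH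
  have hmk : S.Con m {k} := S.ax2 m _ _ (by simp) hmH
  exact ⟨m, hm, hmXY, principal_mono hmi hiX hmXY Finset.subset_union_left,
    principal_mono hmk hkY hmXY Finset.subset_union_right⟩

end state

section span

variable {z P v : Set A}

lemma principal_subset_span (hi : i ∈ z) (hX : ↑X ⊆ P) (h : S.Con i X) :
    S.principal i X ⊆ S.span z P := fun _ ha => ⟨i, hi, X, hX, h, ha⟩

lemma exists_subset_principal_of_subset_span (hz : S.state z) (hP : P ⊆ z) {F : Finset A}
    (hF : ↑F ⊆ S.span z P) :
    ∃ k ∈ z, ∃ G : Finset A, ↑G ⊆ P ∧ S.Con k G ∧ ↑F ⊆ S.principal k G := by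
  classical
  induction F using Finset.induction with
  | empty => exact ⟨S.Δ, hz.delta_mem, ∅, by simp, con_empty _, by simp⟩
  | insert b F _ ih =>
    rw [Finset.coe_insert, Set.insert_subset_iff] at hF
    obtain ⟨⟨i, hi, X, hX, hiX, hb⟩, hF⟩ := hF
    obtain ⟨k, hk, G, hG, hkG, hFG⟩ := ih hF
    obtain ⟨m, hm, hmXG, hXm, hGm⟩ :=
      hz.exists_principal_upper hi hk (hX.trans hP) (hG.trans hP) hiX hkG
    refine ⟨m, hm, X ∪ G, by simp [hX, hG], hmXG, ?_⟩
    rw [Finset.coe_insert, Set.insert_subset_iff]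
    exact ⟨hXm hb, hFG.trans hGm⟩

lemma state_span (hz : S.state z) (hP : P ⊆ z) : S.state (S.span z P) := by
  classical
  refine ⟨fun F hF => ?_, fun j hj W hW a hjW ha => ?_, fun a ⟨i, hi, X, hX, hiX, ha⟩ => ?_⟩
  · obtain ⟨k, hk, G, hG, hkG, hFG⟩ := exists_subset_principal_of_subset_span hz hP hF
    obtain ⟨e, he, heF⟩ := S.ax8 k G F hkG fun _ hb => hFG hb
    exact ⟨e, principal_subset_span hk hG hkG he, heF⟩
  · obtain ⟨k, hk, G, hG, hkG, hjWG⟩ := exists_subset_principal_of_subset_span hz hP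
      (F := insert j W) (by simp [Set.insert_subset_iff, hj, hW])
    rw [Finset.coe_insert, Set.insert_subset_iff] at hjWG
    exact principal_subset_span hk hG hkG
      (ent_of_ent_of_subset_principal hkG hjWG.1 hjWG.2 hjW ha)
  · obtain ⟨e, Z, he, hZ, heZ, hea⟩ := exists_factor_of_ent hiX ha
    have hiXspan := principal_subset_span hi hX hiX
    exact ⟨e, hiXspan he, Z, hZ.trans hiXspan, heZ, hea⟩

lemma span_subset (hz : S.state z) (hP : P ⊆ z) : S.span z P ⊆ z :=
  fun _ ⟨_, hi, _, hX, h, ha⟩ => hz.ent_mem hi (hX.trans hP) h ha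

lemma subset_span {x : Set A} (hx : S.state x) (hxz : x ⊆ z) (hxP : x ⊆ P) :
    x ⊆ S.span z P := fun _ ha => by
  obtain ⟨i, hi, X, hX, h, ha⟩ := hx.exists_ent ha
  exact ⟨i, hxz hi, X, hX.trans hxP, h, ha⟩

lemma span_subset_of_subset (hz : S.state z) (hv : S.state v) (hPv : P ⊆ v) (hvz : v ⊆ z) :
    S.span z P ⊆ v := fun _ ⟨i, hi, X, hX, hiX, ha⟩ => by
  obtain ⟨m, hm, hmX⟩ := hv.exists_con (hX.trans hPv)
  exact hv.ent_mem hm (hX.trans hPv) hmX (hz.ent_of_ent hi (hvz hm) hiX hmX ha)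

lemma isLeast_span_union {x y z : {x : Set A // S.state x}} (hxz : x ≤ z) (hyz : y ≤ z) :
    IsLeast {v | v ≤ z ∧ x ≤ v ∧ y ≤ v}
      ⟨S.span z.1 (x.1 ∪ y.1), state_span z.2 (Set.union_subset hxz hyz)⟩ :=
  ⟨⟨span_subset z.2 (Set.union_subset hxz hyz),
      subset_span x.2 hxz Set.subset_union_left, subset_span y.2 hyz Set.subset_union_right⟩,
    fun v ⟨hvz, hxv, hyv⟩ => span_subset_of_subset z.2 v.2 (Set.union_subset hxv hyv) hvz⟩

end span

section directed

variable {D : Set {x : Set A // S.state x}}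

lemma state_biUnion (hD : DirectedOn (· ≤ ·) D) (hne : D.Nonempty) :
    S.state (⋃ u ∈ D, u.1) := by
  classical
  refine ⟨fun F hF => ?_, fun i hi X hX a hiX ha => ?_, fun a ha => ?_⟩
  · obtain ⟨u, hu, hFu⟩ := hD.exists_mem_subset_of_finset_subset_biUnion hne hF
    obtain ⟨i, hi, hiF⟩ := u.2.exists_con hFu
    exact ⟨i, Set.mem_biUnion hu hi, hiF⟩
  · obtain ⟨u, hu, hiXu⟩ := hD.exists_mem_subset_of_finset_subset_biUnion hne (s := insert i X)
      (by simp [Set.insert_subset_iff, hi, hX])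
    rw [Finset.coe_insert, Set.insert_subset_iff] at hiXu
    exact Set.mem_biUnion hu (u.2.ent_mem hiXu.1 hiXu.2 hiX ha)
  · obtain ⟨u, hu, hau⟩ := Set.mem_iUnion₂.mp ha
    obtain ⟨i, hi, X, hX, hiX, ha⟩ := u.2.exists_ent hau
    have hsub : u.1 ⊆ ⋃ u ∈ D, u.1 := Set.subset_biUnion_of_mem (u := Subtype.val) hu
    exact ⟨i, hsub hi, X, hX.trans hsub, hiX, ha⟩

lemma val_eq_biUnion_of_isLUB (hD : DirectedOn (· ≤ ·) D) (hne : D.Nonempty)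
    {l : {x : Set A // S.state x}} (hl : IsLUB D l) : l.1 = ⋃ u ∈ D, u.1 :=
  congrArg Subtype.val (hl.unique (isLUB_of_biUnion_eq (x := ⟨_, state_biUnion hD hne⟩) rfl))

end directed

lemma wayBelow_of_val_eq_principal {x u : {x : Set A // S.state x}}
    (hu : u.1 = S.principal i X) (hi : i ∈ x.1) (hX : ↑X ⊆ x.1) (h : S.Con i X) :
    wayBelow u x := by
  classical
  intro T hT hne l hl hxl
  have hiX : ↑(insert i X) ⊆ ⋃ v ∈ T, v.1 := by
    rw [← val_eq_biUnion_of_isLUB hT hne hl]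
    exact Set.Subset.trans (by simp [Set.insert_subset_iff, hi, hX]) hxl
  obtain ⟨w, hw, hiXw⟩ := hT.exists_mem_subset_of_finset_subset_biUnion hne hiX
  rw [Finset.coe_insert, Set.insert_subset_iff] at hiXw
  exact ⟨w, hw, hu.trans_subset (w.2.principal_subset hiXw.1 hiXw.2 h)⟩

lemma approximants_nonempty {x : Set A} (hx : S.state x) : (S.approximants x).Nonempty :=
  ⟨⟨_, state_principal (con_empty S.Δ)⟩, S.Δ, hx.delta_mem, ∅, by simp, con_empty _, rfl⟩

lemma directedOn_approximants {x : Set A} (hx : S.state x) :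
    DirectedOn (· ≤ ·) (S.approximants x) := by
  classical
  rintro u ⟨i, hi, X, hX, hiX, hu⟩ v ⟨k, hk, Y, hY, hkY, hv⟩
  obtain ⟨m, hm, hmXY, hXm, hYm⟩ := hx.exists_principal_upper hi hk hX hY hiX hkY
  exact ⟨⟨_, state_principal hmXY⟩, ⟨m, hm, X ∪ Y, by simp [hX, hY], hmXY, rfl⟩,
    hu.trans_subset hXm, hv.trans_subset hYm⟩

lemma isLUB_approximants (x : {x : Set A // S.state x}) : IsLUB (S.approximants x.1) x := by
  refine isLUB_of_biUnion_eq (Set.Subset.antisymm ?_ fun a ha => ?_)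
  · exact Set.iUnion₂_subset fun u ⟨i, hi, X, hX, hiX, hu⟩ => hu ▸ x.2.principal_subset hi hX hiX
  · obtain ⟨i, hi, X, hX, hiX, ha⟩ := x.2.exists_ent ha
    exact Set.mem_biUnion (t := Subtype.val) (x := ⟨_, state_principal hiX⟩)
      ⟨i, hi, X, hX, hiX, rfl⟩ ha

end IWS

/-- Theorem 3.8: the poset of states is an L-domain with least element [∅]_Δ and
basis the principal states [X]_i. -/
theorem states_LDomain {A : Type*} (S : IWS A) :
    (∀ D : Set {x : Set A // S.state x},
      DirectedOn (· ≤ ·) D → D.Nonempty → ∃ l, IsLUB D l) ∧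
    (∃ bot : {x : Set A // S.state x},
      bot.1 = {a | S.ent S.Δ ∅ a} ∧ ∀ x, bot ≤ x) ∧
    (∀ x : {x : Set A // S.state x},
      ∃ D ⊆ {u : {x : Set A // S.state x} |
          (∃ i, ∃ X : Finset A, S.Con i X ∧ u.1 = {a | S.ent i X a}) ∧ wayBelow u x},
        D.Nonempty ∧ DirectedOn (· ≤ ·) D ∧ IsLUB D x) ∧
    (∀ x y z : {x : Set A // S.state x}, x ≤ z → y ≤ z →
      ∃ w, IsLeast {v | v ≤ z ∧ x ≤ v ∧ y ≤ v} w) := by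
  refine ⟨fun D hD hne => ⟨_, isLUB_of_biUnion_eq (x := ⟨_, IWS.state_biUnion hD hne⟩) rfl⟩,
    ⟨⟨_, IWS.state_principal (IWS.con_empty S.Δ)⟩, rfl, fun x => x.2.principal_delta_subset⟩,
    fun x => ⟨S.approximants x.1, ?_, IWS.approximants_nonempty x.2,
      IWS.directedOn_approximants x.2, IWS.isLUB_approximants x⟩,
    fun x y z hxz hyz => ⟨_, IWS.isLeast_span_union hxz hyz⟩⟩
  rintro u ⟨i, hi, X, hX, hiX, hu⟩
  exact ⟨⟨i, X, hiX, hu⟩, IWS.wayBelow_of_val_eq_principal hu hi hX hiX⟩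
end
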